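/- Let (X, 𝒜, ν) be a probability space and let T : X → X be an invertible bimeasurable measure-preserving transformation. Let φ : X → ℝ be a measurable function, γ ∈ ℝ, and define Λ = {y ∈ X : ∑_{j=1}^{k} φ(T^{−j} y) ≥ γk for every integer k ≥ 1}. Let 0 < ε' < 1 and suppose there exists a measurable set A ⊆ X with ν(A) > 1 − ε' such that for every x ∈ A, liminf_{N→∞} (1/N)·#{n ∈ {1, …, N} : n is a γ-Pliss time for x} > 1 − ε'. Then ν(Λ) ≥ (1 − ε')². -/

import Mathlib

open MeasureTheory Filter Finset
open scoped ENNReal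

/-!
If `n ≥ K` is a `γ`-Pliss time of `x`, then `T^n x` satisfies the first `K` conditions defining
`Λ`, i.e. lies in the truncated block `Λ_K`. Hence every `x ∈ A` visits `Λ_K` with lower
asymptotic frequency above `1 - ε'`. Since `T` preserves `ν`, each visit frequency integrates to
`ν Λ_K`, so Fatou's lemma gives `(1 - ε') ν A ≤ ν Λ_K`; finally `Λ = ⋂ K, Λ_K` is a decreasing
intersection.
-/

theorem Finset.card_filter_le_card_filter_add {p q : ℕ → Prop} [DecidablePred p] [DecidablePred q]
    {K : ℕ} (hpq : ∀ n, p n → K ≤ n → q n) (s : Finset ℕ) :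
    #{n ∈ s | p n} ≤ #{n ∈ s | q n} + K := by
  classical
  have : {n ∈ s | p n} ⊆ {n ∈ s | q n} ∪ range K := by
    intro n hn
    simp only [mem_filter, mem_union, mem_range] at hn ⊢
    by_cases hKn : K ≤ n
    · exact .inl ⟨hn.1, hpq n hn.2 hKn⟩
    · exact .inr (by omega)
  simpa using (card_le_card this).trans (card_union_le _ _)

theorem eventually_le_div_of_lt_liminf_div {u v : ℕ → ℕ} {K : ℕ} (huv : ∀ N, u N ≤ v N + K)
    {c : ℝ} (hc : c < liminf (fun N ↦ (u N : ℝ) / N) atTop) :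
    ∀ᶠ N in atTop, c ≤ (v N : ℝ) / N := by
  obtain ⟨b, hcb, hb⟩ := exists_between hc
  have hu : ∀ᶠ N in atTop, b < (u N : ℝ) / N :=
    eventually_lt_of_lt_liminf hb (isBoundedUnder_of ⟨0, fun N ↦ by positivity⟩)
  have hK : ∀ᶠ N : ℕ in atTop, (K : ℝ) / N < b - c :=
    (tendsto_const_div_atTop_nhds_zero_nat (K : ℝ)).eventually_lt_const (by linarith)
  filter_upwards [hu, hK] with N hbu hKN
  have : (u N : ℝ) / N ≤ (v N : ℝ) / N + K / N := by
    rw [← add_div]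
    gcongr
    exact_mod_cast huv N
  linarith

theorem ENNReal.ofReal_le_liminf_natCast_div {v : ℕ → ℕ} {c : ℝ}
    (h : ∀ᶠ N in atTop, c ≤ (v N : ℝ) / N) :
    ENNReal.ofReal c ≤ liminf (fun N ↦ (v N : ℝ≥0∞) / N) atTop := by
  refine le_liminf_of_le (by isBoundedDefault) ?_
  filter_upwards [h, eventually_gt_atTop 0] with N hN hN0
  calc ENNReal.ofReal c ≤ ENNReal.ofReal ((v N : ℝ) / N) := ENNReal.ofReal_le_ofReal hN
    _ = (v N : ℝ≥0∞) / N := by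
      rw [ENNReal.ofReal_div_of_pos (by exact_mod_cast hN0), ENNReal.ofReal_natCast,
        ENNReal.ofReal_natCast]

namespace MeasureTheory

variable {X : Type*}

open Classical in
noncomputable def visitCount (T : X → X) (s : Set X) (N : ℕ) (x : X) : ℕ :=
  #{n ∈ Icc 1 N | T^[n] x ∈ s}

theorem natCast_visitCount (T : X → X) (s : Set X) (N : ℕ) (x : X) :
    (visitCount T s N x : ℝ≥0∞) = ∑ n ∈ Icc 1 N, (T^[n] ⁻¹' s).indicator 1 x := by
  classical
  simp only [visitCount, natCast_card_filter, Set.indicator_apply, Set.mem_preimage, Pi.one_apply]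

variable [MeasurableSpace X]

theorem measurable_visitCount {T : X → X} (hT : Measurable T) {s : Set X} (hs : MeasurableSet s)
    (N : ℕ) : Measurable fun x ↦ (visitCount T s N x : ℝ≥0∞) := by
  simp only [natCast_visitCount]
  exact Finset.measurable_sum _ fun n _ ↦ measurable_one.indicator (hs.preimage (hT.iterate n))

theorem MeasurePreserving.lintegral_visitCount {μ : Measure X} {T : X → X}
    (hT : MeasurePreserving T μ μ) {s : Set X} (hs : MeasurableSet s) (N : ℕ) :
    ∫⁻ x, (visitCount T s N x : ℝ≥0∞) ∂μ = μ s * N := by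
  have hmeas : ∀ n, MeasurableSet (T^[n] ⁻¹' s) := fun n ↦ hs.preimage (hT.measurable.iterate n)
  simp only [natCast_visitCount]
  rw [lintegral_finsetSum _ fun n _ ↦ measurable_one.indicator (hmeas n)]
  simp only [lintegral_indicator_one (hmeas _),
    (hT.iterate _).measure_preimage hs.nullMeasurableSet, sum_const, Nat.card_Icc,
    add_tsub_cancel_right, nsmul_eq_mul, mul_comm]

/-- Fatou's lemma for the visit frequencies, whose integrals all equal `μ s` by invariance. -/
theorem MeasurePreserving.mul_measure_le_of_le_liminf_visitCount {μ : Measure X} {T : X → X}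
    (hT : MeasurePreserving T μ μ) {s : Set X} (hs : MeasurableSet s) {A : Set X} {c : ℝ≥0∞}
    (hA : ∀ x ∈ A, c ≤ liminf (fun N : ℕ ↦ (visitCount T s N x : ℝ≥0∞) / N) atTop) :
    c * μ A ≤ μ s := by
  set f : ℕ → X → ℝ≥0∞ := fun N x ↦ (visitCount T s N x : ℝ≥0∞) / N
  have hf : ∀ N, Measurable (f N) := fun N ↦
    (measurable_visitCount hT.measurable hs N).div_const _
  have hf_int : ∀ᶠ N : ℕ in atTop, ∫⁻ x, f N x ∂μ = μ s := by
    filter_upwards [eventually_ne_atTop 0] with N hN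
    simp only [f, div_eq_mul_inv]
    rw [lintegral_mul_const _ (measurable_visitCount hT.measurable hs N),
      hT.lintegral_visitCount hs, ← div_eq_mul_inv,
      ENNReal.mul_div_cancel_right (by exact_mod_cast hN) (ENNReal.natCast_ne_top N)]
  calc c * μ A ≤ c * μ {x | c ≤ liminf (fun N ↦ f N x) atTop} := by gcongr; exact hA
    _ ≤ ∫⁻ x, liminf (fun N ↦ f N x) atTop ∂μ := mul_meas_ge_le_lintegral (.liminf hf) c
    _ ≤ liminf (fun N ↦ ∫⁻ x, f N x ∂μ) atTop := lintegral_liminf_le hf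
    _ = μ s := by rw [liminf_congr hf_int, liminf_const]

end MeasureTheory

section Pliss

variable {X : Type*}

def IsPlissTime (T : X → X) (φ : X → ℝ) (γ : ℝ) (x : X) (n : ℕ) : Prop :=
  ∀ m < n, γ * ((n : ℝ) - m) ≤ ∑ j ∈ Ico m n, φ (T^[j] x)

/-- The first `K` conditions defining the Pesin-like block, with `S` in the role of `T⁻¹`. -/
def truncatedPesinBlock (S : X → X) (φ : X → ℝ) (γ : ℝ) (K : ℕ) : Set X :=
  {y | ∀ k, 1 ≤ k → k ≤ K → γ * k ≤ ∑ j ∈ Icc 1 k, φ (S^[j] y)}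

theorem truncatedPesinBlock_antitone (S : X → X) (φ : X → ℝ) (γ : ℝ) :
    Antitone (truncatedPesinBlock S φ γ) :=
  fun _ _ hKL _ hy k hk hkK ↦ hy k hk (hkK.trans hKL)

theorem iInter_truncatedPesinBlock (S : X → X) (φ : X → ℝ) (γ : ℝ) :
    ⋂ K, truncatedPesinBlock S φ γ K = {y | ∀ k, 1 ≤ k → γ * k ≤ ∑ j ∈ Icc 1 k, φ (S^[j] y)} := by
  ext y
  simp only [truncatedPesinBlock, Set.mem_iInter, Set.mem_ofPred_eq]
  exact ⟨fun h k hk ↦ h k k hk le_rfl, fun h _ k hk _ ↦ h k hk⟩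

theorem measurableSet_truncatedPesinBlock [MeasurableSpace X] {S : X → X} (hS : Measurable S)
    {φ : X → ℝ} (hφ : Measurable φ) (γ : ℝ) (K : ℕ) :
    MeasurableSet (truncatedPesinBlock S φ γ K) := by
  have : truncatedPesinBlock S φ γ K =
      ⋂ k ∈ Icc 1 K, {y | γ * k ≤ ∑ j ∈ Icc 1 k, φ (S^[j] y)} := by
    ext y
    simp [truncatedPesinBlock, and_imp]
  rw [this]
  exact (Icc 1 K).finite_toSet.measurableSet_biInter fun k _ ↦ measurableSet_le measurable_const
    (Finset.measurable_sum _ fun j _ ↦ hφ.comp (hS.iterate j))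

theorem Function.LeftInverse.iterate_iterate_of_le {S T : X → X} (hST : Function.LeftInverse S T)
    {j n : ℕ} (hjn : j ≤ n) (x : X) : S^[j] (T^[n] x) = T^[n - j] x := by
  rw [← Nat.add_sub_cancel' hjn, Function.iterate_add_apply, hST.iterate j, Nat.add_sub_cancel_left]

theorem IsPlissTime.iterate_mem_truncatedPesinBlock {S T : X → X} (hST : Function.LeftInverse S T)
    {φ : X → ℝ} {γ : ℝ} {x : X} {n : ℕ} (hn : IsPlissTime T φ γ x n) :
    T^[n] x ∈ truncatedPesinBlock S φ γ n := by
  intro k _ hkn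
  have hsum : ∑ j ∈ Icc 1 k, φ (S^[j] (T^[n] x)) = ∑ i ∈ Ico (n - k) n, φ (T^[i] x) :=
    calc ∑ j ∈ Icc 1 k, φ (S^[j] (T^[n] x))
        = ∑ j ∈ Ico 1 (k + 1), φ (T^[n - j] x) := by
          rw [Finset.Ico_add_one_right_eq_Icc]
          exact sum_congr rfl fun j hj ↦ by rw [hST.iterate_iterate_of_le (by simp at hj; omega)]
      _ = ∑ i ∈ Ico (n + 1 - (k + 1)) (n + 1 - 1), φ (T^[i] x) :=
          sum_Ico_reflect (fun i ↦ φ (T^[i] x)) 1 (by omega)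
      _ = ∑ i ∈ Ico (n - k) n, φ (T^[i] x) := by simp
  have := hn (n - k) (by omega)
  rwa [Nat.cast_sub hkn, sub_sub_cancel, ← hsum] at this

end Pliss

theorem MeasureTheory.MeasurePreserving.ofReal_mul_measure_le_truncatedPesinBlock
    {X : Type*} [MeasurableSpace X] {μ : Measure X} {T S : X → X} (hT : MeasurePreserving T μ μ)
    (hS : Measurable S) (hST : Function.LeftInverse S T) {φ : X → ℝ} (hφ : Measurable φ) {γ : ℝ}
    {A : Set X} {c : ℝ}
    [∀ x, DecidablePred (IsPlissTime T φ γ x)]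
    (hA : ∀ x ∈ A, c < liminf (fun N : ℕ ↦ (#{n ∈ Icc 1 N | IsPlissTime T φ γ x n} : ℝ) / N) atTop)
    (K : ℕ) : ENNReal.ofReal c * μ A ≤ μ (truncatedPesinBlock S φ γ K) := by
  refine hT.mul_measure_le_of_le_liminf_visitCount (measurableSet_truncatedPesinBlock hS hφ γ K)
    fun x hx ↦ ENNReal.ofReal_le_liminf_natCast_div <|
      eventually_le_div_of_lt_liminf_div (K := K) (fun N ↦ ?_) (hA x hx)
  classical
  exact card_filter_le_card_filter_add (fun n hn hKn ↦
    truncatedPesinBlock_antitone S φ γ hKn (hn.iterate_mem_truncatedPesinBlock hST)) _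

theorem measure_of_pesin_like_block_general
    {X : Type*} [MeasurableSpace X] (ν : Measure X) [IsProbabilityMeasure ν]
    (T S : X → X) (hSmeas : Measurable S)
    (hST : Function.LeftInverse S T)
    (hT : MeasurePreserving T ν ν)
    (φ : X → ℝ) (hφ : Measurable φ) (γ : ℝ)
    (Λ : Set X)
    (hΛ : Λ = {y : X | ∀ k : ℕ, 1 ≤ k →
      γ * (k : ℝ) ≤ ∑ j ∈ Finset.Icc 1 k, φ (S^[j] y)})
    (ε' : ℝ) (hε'lt : ε' < 1)
    (A : Set X) (hAν : ν A > ENNReal.ofReal (1 - ε'))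
    (hfreq : ∀ x ∈ A,
      (1 - ε' : ℝ) <
        liminf (fun N : ℕ =>
          (((Finset.Icc 1 N).filter (fun n =>
            ∀ m : ℕ, m < n →
              γ * ((n : ℝ) - (m : ℝ)) ≤ ∑ j ∈ Finset.Ico m n, φ (T^[j] x))).card : ℝ) / N)
          atTop) :
    ν Λ ≥ ENNReal.ofReal ((1 - ε') ^ 2) := by
  classical
  have hblock : ∀ K, ENNReal.ofReal (1 - ε') * ν A ≤ ν (truncatedPesinBlock S φ γ K) :=
    hT.ofReal_mul_measure_le_truncatedPesinBlock hSmeas hST hφ fun x hx ↦ by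
      convert hfreq x hx
      exact Iff.rfl
  have hΛ_eq : ν Λ = ⨅ K, ν (truncatedPesinBlock S φ γ K) := by
    rw [hΛ, ← iInter_truncatedPesinBlock]
    exact (truncatedPesinBlock_antitone S φ γ).measure_iInter
      (fun K ↦ (measurableSet_truncatedPesinBlock hSmeas hφ γ K).nullMeasurableSet)
      ⟨0, measure_ne_top ν _⟩
  calc ENNReal.ofReal ((1 - ε') ^ 2) = ENNReal.ofReal (1 - ε') * ENNReal.ofReal (1 - ε') := by
        rw [sq, ENNReal.ofReal_mul (by linarith)]
    _ ≤ ENNReal.ofReal (1 - ε') * ν A := by gcongr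
    _ ≤ ν Λ := hΛ_eq ▸ le_iInf hblock

/-- **Measure of Pesin-like blocks.** Let `T` be an invertible bimeasurable
measure-preserving transformation of a probability space `(X, ν)`, with measurable
inverse `S`. Let `φ : X → ℝ` be measurable, `γ ∈ ℝ`, and let
`Λ = {y | ∑_{j=1}^{k} φ(T^{−j} y) ≥ γ·k for all k ≥ 1}`. Let `0 < ε' < 1` and suppose
there is a measurable set `A` with `ν A > 1 − ε'` such that for every `x ∈ A` the
asymptotic frequency of `γ`-Pliss times of `x` exceeds `1 − ε'`. Then
`ν Λ ≥ (1 − ε')²`. -/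
theorem measure_of_pesin_like_block
    {X : Type*} [MeasurableSpace X] (ν : Measure X) [IsProbabilityMeasure ν]
    (T S : X → X) (hTmeas : Measurable T) (hSmeas : Measurable S)
    (hST : Function.LeftInverse S T) (hTS : Function.RightInverse S T)
    (hT : MeasurePreserving T ν ν)
    (φ : X → ℝ) (hφ : Measurable φ) (γ : ℝ)
    (Λ : Set X)
    (hΛ : Λ = {y : X | ∀ k : ℕ, 1 ≤ k →
      γ * (k : ℝ) ≤ ∑ j ∈ Finset.Icc 1 k, φ (S^[j] y)})
    (ε' : ℝ) (hε'pos : 0 < ε') (hε'lt : ε' < 1)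
    (A : Set X) (hAmeas : MeasurableSet A)
    (hAν : ν A > ENNReal.ofReal (1 - ε'))
    (hfreq : ∀ x ∈ A,
      (1 - ε' : ℝ) <
        liminf (fun N : ℕ =>
          (((Finset.Icc 1 N).filter (fun n =>
            ∀ m : ℕ, m < n →
              γ * ((n : ℝ) - (m : ℝ)) ≤ ∑ j ∈ Finset.Ico m n, φ (T^[j] x))).card : ℝ) / N)
          atTop) :
    ν Λ ≥ ENNReal.ofReal ((1 - ε') ^ 2) :=
  measure_of_pesin_like_block_general ν T S hSmeas hST hT φ hφ γ Λ hΛ ε' hε'lt A hAν hfreq
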